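/- arXiv:1006.2275 — 12 statements merged into one kernel-verified Lean document; each statement's English description precedes it below -/
import Mathlib

section
/- Let α, n, m, l be natural numbers, and let g, h, f be colligations of sizes (α,n), (α,m), (α,l) respectively. Then (g∘h)∘f, which is a colligation of size (α,(n+m)+l), equals g∘(h∘f) after reindexing along the natural identification of index sets Fin α ⊕ ((Fin n ⊕ Fin m) ⊕ Fin l) ≃ Fin α ⊕ (Fin n ⊕ (Fin m ⊕ Fin l)) given by associativity of the disjoint sum. That is, the product of colligations is associative. -/
/-!
The product `g ∘ h` is the ordinary matrix product of `g`, extended by the identity on the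
`m`-block, with `h`, extended by the identity on the `n`-block. These extensions are
multiplicative and commute with regrouping the index sums, so associativity of `∘` reduces to
associativity of matrix multiplication.
-/

open Matrix

/-- The product of operator colligations: given `g` of size `(A, I)` and `h` of size `(A, J)`
(as block matrices), their product is the block matrix
`[[A·P, B, A·Q], [C·P, D, C·Q], [R, 0, T]]` indexed by `A ⊕ (I ⊕ J)`. -/
noncomputable def colProd {A I J : Type*} [Fintype A]
    (g : Matrix (A ⊕ I) (A ⊕ I) ℂ) (h : Matrix (A ⊕ J) (A ⊕ J) ℂ) :
    Matrix (A ⊕ (I ⊕ J)) (A ⊕ (I ⊕ J)) ℂ :=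
  fromBlocks (g.toBlocks₁₁ * h.toBlocks₁₁)
    (fromCols g.toBlocks₁₂ (g.toBlocks₁₁ * h.toBlocks₁₂))
    (fromRows (g.toBlocks₂₁ * h.toBlocks₁₁) h.toBlocks₂₁)
    (fromBlocks g.toBlocks₂₂ (g.toBlocks₂₁ * h.toBlocks₁₂) 0 h.toBlocks₂₂)

theorem Matrix.reindex_mul_reindex {m n R : Type*} [Fintype m] [Fintype n] [AddCommMonoid R]
    [Mul R] (e : m ≃ n) (M N : Matrix m m R) :
    reindex e e M * reindex e e N = reindex e e (M * N) :=
  submatrix_mul_equiv M N _ _ _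

namespace Colligation

variable {A I J L R : Type*}

def extendRight [DecidableEq J] [Zero R] [One R] (g : Matrix (A ⊕ I) (A ⊕ I) R) :
    Matrix (A ⊕ (I ⊕ J)) (A ⊕ (I ⊕ J)) R :=
  reindex (Equiv.sumAssoc A I J) (Equiv.sumAssoc A I J) (fromBlocks g 0 0 1)

def extendMid [DecidableEq I] [Zero R] [One R] (h : Matrix (A ⊕ J) (A ⊕ J) R) :
    Matrix (A ⊕ (I ⊕ J)) (A ⊕ (I ⊕ J)) R :=
  reindex (Equiv.sumCongr (Equiv.refl A) (Equiv.sumComm J I))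
    (Equiv.sumCongr (Equiv.refl A) (Equiv.sumComm J I)) (extendRight h)

theorem extendRight_mul [Fintype A] [Fintype I] [Fintype J] [DecidableEq J] [Semiring R]
    (g g' : Matrix (A ⊕ I) (A ⊕ I) R) :
    (extendRight (g * g') : Matrix (A ⊕ (I ⊕ J)) _ R) = extendRight g * extendRight g' := by
  simp only [extendRight, reindex_mul_reindex, fromBlocks_multiply]
  simp

theorem extendMid_mul [Fintype A] [Fintype I] [Fintype J] [DecidableEq I] [Semiring R]
    (h h' : Matrix (A ⊕ J) (A ⊕ J) R) :
    (extendMid (h * h') : Matrix (A ⊕ (I ⊕ J)) _ R) = extendMid h * extendMid h' := by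
  rw [extendMid, extendMid, extendMid, reindex_mul_reindex, extendRight_mul]

theorem colProd_eq_extendRight_mul_extendMid [Fintype A] [Fintype I] [Fintype J]
    [DecidableEq I] [DecidableEq J] (g : Matrix (A ⊕ I) (A ⊕ I) ℂ)
    (h : Matrix (A ⊕ J) (A ⊕ J) ℂ) : colProd g h = extendRight g * extendMid h := by
  ext i j
  rcases i with i | i | i <;> rcases j with j | j | j <;>
    simp [colProd, extendRight, extendMid, mul_apply, Fintype.sum_sum_type, one_apply,
      toBlocks₁₁, toBlocks₁₂, toBlocks₂₁, toBlocks₂₂]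

section Regrouping

variable [Zero R] [One R]

local notation "regroup" => Equiv.sumCongr (Equiv.refl A) (Equiv.sumAssoc I J L)

theorem reindex_extendRight_extendRight [DecidableEq J] [DecidableEq L]
    (g : Matrix (A ⊕ I) (A ⊕ I) R) :
    reindex regroup regroup
        (extendRight (extendRight g : Matrix (A ⊕ (I ⊕ J)) _ R) :
          Matrix (A ⊕ ((I ⊕ J) ⊕ L)) _ R)
      = extendRight g := by
  ext i j
  rcases i with i | i | i | i <;> rcases j with j | j | j | j <;>
    simp [extendRight, one_apply]

theorem reindex_extendRight_extendMid [DecidableEq I] [DecidableEq L]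
    (h : Matrix (A ⊕ J) (A ⊕ J) R) :
    reindex regroup regroup
        (extendRight (extendMid h : Matrix (A ⊕ (I ⊕ J)) _ R) :
          Matrix (A ⊕ ((I ⊕ J) ⊕ L)) _ R)
      = extendMid (extendRight h : Matrix (A ⊕ (J ⊕ L)) _ R) := by
  ext i j
  rcases i with i | i | i | i <;> rcases j with j | j | j | j <;>
    simp [extendRight, extendMid, one_apply]

theorem reindex_extendMid_extendMid [DecidableEq I] [DecidableEq J]
    (f : Matrix (A ⊕ L) (A ⊕ L) R) :
    reindex regroup regroup (extendMid f : Matrix (A ⊕ ((I ⊕ J) ⊕ L)) _ R)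
      = extendMid (extendMid f : Matrix (A ⊕ (J ⊕ L)) _ R) := by
  ext i j
  rcases i with i | i | i | i <;> rcases j with j | j | j | j <;>
    simp [extendRight, extendMid, one_apply]

end Regrouping

end Colligation

open Colligation

/-- the product of colligations is associative, after reindexing along the
natural associativity identification
`Fin α ⊕ ((Fin n ⊕ Fin m) ⊕ Fin l) ≃ Fin α ⊕ (Fin n ⊕ (Fin m ⊕ Fin l))`. -/
theorem colProd_assoc {α n m l : ℕ}
    (g : Matrix (Fin α ⊕ Fin n) (Fin α ⊕ Fin n) ℂ)
    (h : Matrix (Fin α ⊕ Fin m) (Fin α ⊕ Fin m) ℂ)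
    (f : Matrix (Fin α ⊕ Fin l) (Fin α ⊕ Fin l) ℂ) :
    Matrix.reindex
        (Equiv.sumCongr (Equiv.refl (Fin α)) (Equiv.sumAssoc (Fin n) (Fin m) (Fin l)))
        (Equiv.sumCongr (Equiv.refl (Fin α)) (Equiv.sumAssoc (Fin n) (Fin m) (Fin l)))
        (colProd (colProd g h) f)
      = colProd g (colProd h f) := by
  calc _ = reindex _ _ (extendRight (extendRight g) * extendRight (extendMid h) * extendMid f) := by
        rw [colProd_eq_extendRight_mul_extendMid, colProd_eq_extendRight_mul_extendMid,
          extendRight_mul]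
    _ = extendRight g * extendMid (extendRight h) * extendMid (extendMid f) := by
        rw [← reindex_mul_reindex, ← reindex_mul_reindex, reindex_extendRight_extendRight,
          reindex_extendRight_extendMid, reindex_extendMid_extendMid]
    _ = colProd g (colProd h f) := by
        rw [colProd_eq_extendRight_mul_extendMid, colProd_eq_extendRight_mul_extendMid,
          extendMid_mul, Matrix.mul_assoc]
end

section
/- Let α, n, m be natural numbers, let g = [[A,B],[C,D]] be a colligation of size (α,n) and h = [[P,Q],[R,T]] a colligation of size (α,m), and let z ∈ ℂ be such that both 1 − z·D and 1 − z·T are invertible. Then 1 − z·D'' is invertible, where D'' = [[D, C·Q],[0, T]] is the lower-right (n+m)×(n+m) block of g∘h, and the characteristic functions satisfy χ(g∘h; z) = χ(g; z) · χ(h; z). -/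
/-! The lower-right block `1 - z D''` of `g∘h` is block upper triangular with diagonal blocks
`1 - z D` and `1 - z T`, so its inverse is given by the block-triangular inversion formula;
expanding `χ(g∘h; z)` with it produces exactly the four terms of `χ(g; z) χ(h; z)`. -/

open Matrix

/-- The characteristic function of a colligation `g = [[A,B],[C,D]]`:
`χ(g; z) = A + z·B·(1 − z·D)⁻¹·C`. -/
noncomputable def charFun {A I : Type*} [Fintype A] [Fintype I] [DecidableEq A] [DecidableEq I]
    (g : Matrix (A ⊕ I) (A ⊕ I) ℂ) (z : ℂ) : Matrix A A ℂ :=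
  g.toBlocks₁₁ + z • (g.toBlocks₁₂ * (1 - z • g.toBlocks₂₂)⁻¹ * g.toBlocks₂₁)

section colProd

variable {A I J : Type*} [Fintype A]
  (g : Matrix (A ⊕ I) (A ⊕ I) ℂ) (h : Matrix (A ⊕ J) (A ⊕ J) ℂ)

@[simp]
theorem colProd_toBlocks₁₁ : (colProd g h).toBlocks₁₁ = g.toBlocks₁₁ * h.toBlocks₁₁ :=
  toBlocks_fromBlocks₁₁ ..

@[simp]
theorem colProd_toBlocks₁₂ :
    (colProd g h).toBlocks₁₂ = fromCols g.toBlocks₁₂ (g.toBlocks₁₁ * h.toBlocks₁₂) :=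
  toBlocks_fromBlocks₁₂ ..

@[simp]
theorem colProd_toBlocks₂₁ :
    (colProd g h).toBlocks₂₁ = fromRows (g.toBlocks₂₁ * h.toBlocks₁₁) h.toBlocks₂₁ :=
  toBlocks_fromBlocks₂₁ ..

@[simp]
theorem colProd_toBlocks₂₂ :
    (colProd g h).toBlocks₂₂ =
      fromBlocks g.toBlocks₂₂ (g.toBlocks₂₁ * h.toBlocks₁₂) 0 h.toBlocks₂₂ :=
  toBlocks_fromBlocks₂₂ ..

variable [DecidableEq I] [DecidableEq J]

theorem one_sub_smul_colProd_toBlocks₂₂ (z : ℂ) :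
    1 - z • (colProd g h).toBlocks₂₂ =
      fromBlocks (1 - z • g.toBlocks₂₂) (-(z • (g.toBlocks₂₁ * h.toBlocks₁₂))) 0
        (1 - z • h.toBlocks₂₂) := by
  rw [colProd_toBlocks₂₂, fromBlocks_smul, ← fromBlocks_one, sub_eq_add_neg, fromBlocks_neg,
    fromBlocks_add]
  simp only [smul_zero, neg_zero, add_zero, ← sub_eq_add_neg, zero_sub]

variable [Fintype I] [Fintype J]

theorem isUnit_one_sub_smul_colProd_toBlocks₂₂ {z : ℂ}
    (hg : IsUnit (1 - z • g.toBlocks₂₂)) (hh : IsUnit (1 - z • h.toBlocks₂₂)) :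
    IsUnit (1 - z • (colProd g h).toBlocks₂₂) := by
  rw [one_sub_smul_colProd_toBlocks₂₂, isUnit_fromBlocks_zero₂₁]
  exact ⟨hg, hh⟩

theorem inv_one_sub_smul_colProd_toBlocks₂₂ {z : ℂ}
    (hg : IsUnit (1 - z • g.toBlocks₂₂)) (hh : IsUnit (1 - z • h.toBlocks₂₂)) :
    (1 - z • (colProd g h).toBlocks₂₂)⁻¹ =
      fromBlocks (1 - z • g.toBlocks₂₂)⁻¹
        (z • ((1 - z • g.toBlocks₂₂)⁻¹ * (g.toBlocks₂₁ * h.toBlocks₁₂) *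
          (1 - z • h.toBlocks₂₂)⁻¹))
        0 (1 - z • h.toBlocks₂₂)⁻¹ := by
  rw [one_sub_smul_colProd_toBlocks₂₂,
    inv_fromBlocks_zero₂₁_of_isUnit_iff _ _ _ (iff_of_true hg hh)]
  simp only [Matrix.mul_neg, Matrix.neg_mul, neg_neg, Matrix.mul_smul, Matrix.smul_mul]

variable [DecidableEq A]

theorem charFun_colProd_of_isUnit {z : ℂ}
    (hg : IsUnit (1 - z • g.toBlocks₂₂)) (hh : IsUnit (1 - z • h.toBlocks₂₂)) :
    charFun (colProd g h) z = charFun g z * charFun h z := by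
  simp only [charFun, colProd_toBlocks₁₁, colProd_toBlocks₁₂, colProd_toBlocks₂₁,
    inv_one_sub_smul_colProd_toBlocks₂₂ g h hg hh, fromCols_mul_fromBlocks,
    fromCols_mul_fromRows, Matrix.mul_zero, add_zero, Matrix.add_mul, Matrix.mul_add,
    Matrix.smul_mul, Matrix.mul_smul, smul_add, smul_smul, Matrix.mul_assoc]
  abel

end colProd

/-- multiplicativity of the characteristic function:
`χ(g∘h; z) = χ(g; z) · χ(h; z)` whenever `1 − z·D` and `1 − z·T` are invertible;
moreover `1 − z·D''` is then invertible, where `D''` is the lower-right block of `g∘h`. -/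
theorem charFun_colProd {α n m : ℕ}
    (g : Matrix (Fin α ⊕ Fin n) (Fin α ⊕ Fin n) ℂ)
    (h : Matrix (Fin α ⊕ Fin m) (Fin α ⊕ Fin m) ℂ) (z : ℂ)
    (hg : IsUnit (1 - z • g.toBlocks₂₂)) (hh : IsUnit (1 - z • h.toBlocks₂₂)) :
    IsUnit (1 - z • (colProd g h).toBlocks₂₂) ∧
      charFun (colProd g h) z = charFun g z * charFun h z :=
  ⟨isUnit_one_sub_smul_colProd_toBlocks₂₂ g h hg hh, charFun_colProd_of_isUnit g h hg hh⟩
end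

section
/- Let α, n be natural numbers and let g = [[A,B],[C,D]] be a colligation of size (α,n) which is a unitary matrix (g belongs to the unitary group of (α+n)×(α+n) complex matrices). Let z ∈ ℂ with |z| < 1. Then 1 − z·D is invertible, and the characteristic function is a contraction: for every vector v ∈ ℂ^α, ‖χ(g; z)·v‖ ≤ ‖v‖ in the Euclidean norm. -/
open Matrix

/-!
For `v` put `h = (1 - z D)⁻¹ C v`. Then `g` maps `(v, z h)` to `(χ(g; z) v, h)`, so unitarity
gives `‖χ(g; z) v‖² + ‖h‖² = ‖v‖² + |z|² ‖h‖² ≤ ‖v‖² + ‖h‖²`. Invertibility of `1 - z D` comes from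
the same energy balance: `D` is a compression of `g`, hence a contraction, so `(1 - z D) y = 0`
forces `‖y‖ ≤ |z| ‖y‖`.
-/

open WithLp

section Unitary

variable {𝕜 m k : Type*} [RCLike 𝕜] [Fintype m] [Fintype k] [DecidableEq m] [DecidableEq k]

theorem norm_toLp_mulVec_of_mem_unitaryGroup {U : Matrix m m 𝕜}
    (hU : U ∈ unitaryGroup m 𝕜) (x : m → 𝕜) :
    ‖toLp 2 (U *ᵥ x)‖ = ‖toLp 2 x‖ := by
  rw [← toEuclideanCLM_toLp]
  exact ContinuousLinearMap.norm_map_of_mem_unitary (Unitary.map_mem toEuclideanCLM hU) _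

omit [DecidableEq m] [DecidableEq k] in
theorem norm_toLp_sumElim_sq (x : m → 𝕜) (y : k → 𝕜) :
    ‖toLp 2 (Sum.elim x y)‖ ^ 2 = ‖toLp 2 x‖ ^ 2 + ‖toLp 2 y‖ ^ 2 := by
  simp [EuclideanSpace.norm_sq_eq, Fintype.sum_sum_type]

theorem norm_sq_add_norm_sq_of_mem_unitaryGroup {g : Matrix (m ⊕ k) (m ⊕ k) 𝕜}
    (hg : g ∈ unitaryGroup (m ⊕ k) 𝕜) (x : m → 𝕜) (y : k → 𝕜) :
    ‖toLp 2 (g.toBlocks₁₁ *ᵥ x + g.toBlocks₁₂ *ᵥ y)‖ ^ 2 +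
        ‖toLp 2 (g.toBlocks₂₁ *ᵥ x + g.toBlocks₂₂ *ᵥ y)‖ ^ 2 =
      ‖toLp 2 x‖ ^ 2 + ‖toLp 2 y‖ ^ 2 := by
  have h := norm_toLp_mulVec_of_mem_unitaryGroup hg (Sum.elim x y)
  rw [← fromBlocks_toBlocks g, fromBlocks_mulVec, Sum.elim_comp_inl, Sum.elim_comp_inr] at h
  rw [← norm_toLp_sumElim_sq, ← norm_toLp_sumElim_sq, h]

theorem norm_toBlocks₂₂_mulVec_le {g : Matrix (m ⊕ k) (m ⊕ k) 𝕜}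
    (hg : g ∈ unitaryGroup (m ⊕ k) 𝕜) (y : k → 𝕜) :
    ‖toLp 2 (g.toBlocks₂₂ *ᵥ y)‖ ≤ ‖toLp 2 y‖ := by
  have h := norm_sq_add_norm_sq_of_mem_unitaryGroup hg 0 y
  simp only [mulVec_zero, zero_add, toLp_zero, norm_zero] at h
  refine (sq_le_sq₀ (norm_nonneg _) (norm_nonneg _)).mp ?_
  nlinarith [sq_nonneg ‖toLp 2 (g.toBlocks₁₂ *ᵥ y)‖]

theorem isUnit_one_sub_smul_of_norm_mulVec_le {D : Matrix k k 𝕜}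
    (hD : ∀ y, ‖toLp 2 (D *ᵥ y)‖ ≤ ‖toLp 2 y‖) {z : 𝕜} (hz : ‖z‖ < 1) :
    IsUnit (1 - z • D) := by
  refine mulVec_injective_iff_isUnit.mp <|
    (injective_iff_map_eq_zero (mulVecLin (1 - z • D))).mpr fun y hy => ?_
  have hfix : y = z • (D *ᵥ y) := by
    simpa [sub_mulVec, sub_eq_zero] using hy
  have hle : ‖toLp 2 y‖ ≤ ‖z‖ * ‖toLp 2 y‖ :=
    calc ‖toLp 2 y‖ = ‖z‖ * ‖toLp 2 (D *ᵥ y)‖ := by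
          conv_lhs => rw [hfix]
          rw [toLp_smul, norm_smul]
      _ ≤ ‖z‖ * ‖toLp 2 y‖ := by gcongr; exact hD y
  have : ‖toLp 2 y‖ = 0 := by nlinarith [norm_nonneg (toLp 2 y)]
  simpa using this

theorem isUnit_one_sub_smul_toBlocks₂₂ {g : Matrix (m ⊕ k) (m ⊕ k) 𝕜}
    (hg : g ∈ unitaryGroup (m ⊕ k) 𝕜) {z : 𝕜} (hz : ‖z‖ < 1) :
    IsUnit (1 - z • g.toBlocks₂₂) :=
  isUnit_one_sub_smul_of_norm_mulVec_le (norm_toBlocks₂₂_mulVec_le hg) hz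

end Unitary

section CharFun

variable {m k : Type*} [Fintype m] [Fintype k] [DecidableEq m] [DecidableEq k]
  {g : Matrix (m ⊕ k) (m ⊕ k) ℂ} {z : ℂ}

theorem exists_charFun_mulVec (hunit : IsUnit (1 - z • g.toBlocks₂₂)) (v : m → ℂ) :
    ∃ h : k → ℂ, g.toBlocks₂₁ *ᵥ v + g.toBlocks₂₂ *ᵥ (z • h) = h ∧
      charFun g z *ᵥ v = g.toBlocks₁₁ *ᵥ v + g.toBlocks₁₂ *ᵥ (z • h) := by
  set h := (1 - z • g.toBlocks₂₂)⁻¹ *ᵥ (g.toBlocks₂₁ *ᵥ v) with hh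
  refine ⟨h, ?_, ?_⟩
  · have hsolve : (1 - z • g.toBlocks₂₂) *ᵥ h = g.toBlocks₂₁ *ᵥ v := by
      rw [hh, mulVec_mulVec, mul_nonsing_inv _ ((isUnit_iff_isUnit_det _).mp hunit), one_mulVec]
    rw [sub_mulVec, one_mulVec, smul_mulVec] at hsolve
    rw [mulVec_smul, ← hsolve]
    abel
  · simp only [charFun, add_mulVec, smul_mulVec, mulVec_smul, ← mulVec_mulVec, hh]

theorem norm_charFun_mulVec_le (hg : g ∈ unitaryGroup (m ⊕ k) ℂ) (hz : ‖z‖ < 1) (v : m → ℂ) :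
    ‖toLp 2 (charFun g z *ᵥ v)‖ ≤ ‖toLp 2 v‖ := by
  obtain ⟨h, hstate, hout⟩ := exists_charFun_mulVec (isUnit_one_sub_smul_toBlocks₂₂ hg hz) v
  have hbal := norm_sq_add_norm_sq_of_mem_unitaryGroup hg v (z • h)
  rw [← hout, hstate, toLp_smul, norm_smul, mul_pow] at hbal
  have hz2 : ‖z‖ ^ 2 ≤ 1 := pow_le_one₀ (norm_nonneg z) hz.le
  refine (sq_le_sq₀ (norm_nonneg _) (norm_nonneg _)).mp ?_
  nlinarith [sq_nonneg ‖toLp 2 h‖]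

end CharFun

/-- for a unitary colligation `g` and `|z| < 1`, the matrix `1 − z·D` is
invertible and the characteristic function `χ(g; z)` is a contraction in the Euclidean norm. -/
theorem charFun_contraction {α n : ℕ}
    (g : Matrix (Fin α ⊕ Fin n) (Fin α ⊕ Fin n) ℂ)
    (hg : g ∈ Matrix.unitaryGroup (Fin α ⊕ Fin n) ℂ)
    (z : ℂ) (hz : ‖z‖ < 1) :
    IsUnit (1 - z • g.toBlocks₂₂) ∧
      ∀ v : EuclideanSpace ℂ (Fin α), ‖Matrix.toEuclideanLin (charFun g z) v‖ ≤ ‖v‖ :=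
  ⟨isUnit_one_sub_smul_toBlocks₂₂ hg hz, fun v => norm_charFun_mulVec_le hg hz (ofLp v)⟩
end

section
/- Let α, n be natural numbers and let g = [[A,B],[C,D]] be a colligation of size (α,n) which is a unitary matrix. Let z ∈ ℂ with |z| = 1 be such that 1 − z·D is invertible. Then the characteristic function χ(g; z) is a unitary α×α matrix, i.e. χ(g; z)* · χ(g; z) = 1. -/
open Matrix

/-!
With `Y = (1 − z·D)⁻¹·C` the resolvent identity `C + z·D·Y = Y` says that `g` maps the block
column `[1; z·Y]` to `[χ(g; z); Y]`. An isometry preserves Gram matrices, so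
`1 + |z|²·Yᴴ·Y = χᴴ·χ + Yᴴ·Y`, and `|z| = 1` leaves `χᴴ·χ = 1`.
-/

namespace Matrix

variable {m n p : Type*} [Fintype m] {R : Type*} [CommRing R] [StarRing R]

lemma fromRows_conjTranspose_mul_fromRows [Fintype n] (X : Matrix m p R) (Y : Matrix n p R) :
    (fromRows X Y)ᴴ * fromRows X Y = Xᴴ * X + Yᴴ * Y := by
  rw [conjTranspose_fromRows_eq_fromCols_conjTranspose, fromCols_mul_fromRows]

lemma conjTranspose_mul_self_mul_of_conjTranspose_mul_self_eq_one [DecidableEq m]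
    {U : Matrix m m R} (hU : Uᴴ * U = 1) (V : Matrix m n R) :
    (U * V)ᴴ * (U * V) = Vᴴ * V := by
  rw [conjTranspose_mul, Matrix.mul_assoc, ← Matrix.mul_assoc Uᴴ, hU, Matrix.one_mul]

end Matrix

section Colligation

variable {m n : Type*} [Fintype m] [Fintype n] [DecidableEq m] [DecidableEq n]

lemma fromBlocks_mul_fromRows_one_resolvent (A : Matrix m m ℂ) (B : Matrix m n ℂ)
    (C : Matrix n m ℂ) (D : Matrix n n ℂ) {z : ℂ} (hD : IsUnit (1 - z • D)) :
    fromBlocks A B C D * fromRows (1 : Matrix m m ℂ) (z • ((1 - z • D)⁻¹ * C)) =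
      fromRows (A + z • (B * (1 - z • D)⁻¹ * C)) ((1 - z • D)⁻¹ * C) := by
  set M := (1 - z • D)⁻¹
  have hresolvent : 1 + z • (D * M) = M := by
    have h : (1 - z • D) * M = 1 := mul_nonsing_inv _ ((isUnit_iff_isUnit_det _).mp hD)
    rw [Matrix.sub_mul, Matrix.one_mul, Matrix.smul_mul] at h
    rw [← h, sub_add_cancel]
  rw [fromBlocks_mul_fromRows, Matrix.mul_one, Matrix.mul_one, Matrix.mul_smul, Matrix.mul_smul,
    ← Matrix.mul_assoc, ← Matrix.mul_assoc]
  congr 1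
  calc C + z • (D * M * C) = (1 + z • (D * M)) * C := by
        rw [Matrix.add_mul, Matrix.one_mul, Matrix.smul_mul]
    _ = M * C := by rw [hresolvent]

lemma conjTranspose_charFun_mul_charFun (g : Matrix (m ⊕ n) (m ⊕ n) ℂ) (hg : gᴴ * g = 1)
    {z : ℂ} (hD : IsUnit (1 - z • g.toBlocks₂₂)) :
    (charFun g z)ᴴ * charFun g z =
      1 - (1 - star z * z) • (((1 - z • g.toBlocks₂₂)⁻¹ * g.toBlocks₂₁)ᴴ *
        ((1 - z • g.toBlocks₂₂)⁻¹ * g.toBlocks₂₁)) := by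
  set Y := (1 - z • g.toBlocks₂₂)⁻¹ * g.toBlocks₂₁
  have htransfer : g * fromRows (1 : Matrix m m ℂ) (z • Y) = fromRows (charFun g z) Y := by
    have h := fromBlocks_mul_fromRows_one_resolvent
      g.toBlocks₁₁ g.toBlocks₁₂ g.toBlocks₂₁ g.toBlocks₂₂ hD
    rwa [fromBlocks_toBlocks] at h
  have hgram := conjTranspose_mul_self_mul_of_conjTranspose_mul_self_eq_one hg
    (fromRows (1 : Matrix m m ℂ) (z • Y))
  rw [htransfer, fromRows_conjTranspose_mul_fromRows, fromRows_conjTranspose_mul_fromRows,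
    conjTranspose_smul, Matrix.smul_mul, Matrix.mul_smul, smul_smul, conjTranspose_one,
    Matrix.mul_one] at hgram
  rw [sub_smul, one_smul, sub_sub_eq_add_sub, ← hgram, add_sub_cancel_right]

end Colligation

/-- for a unitary colligation `g` and `|z| = 1` with `1 − z·D` invertible,
the characteristic function `χ(g; z)` is a unitary matrix. -/
theorem charFun_unitary {α n : ℕ}
    (g : Matrix (Fin α ⊕ Fin n) (Fin α ⊕ Fin n) ℂ)
    (hg : g ∈ Matrix.unitaryGroup (Fin α ⊕ Fin n) ℂ)
    (z : ℂ) (hz : ‖z‖ = 1) (hD : IsUnit (1 - z • g.toBlocks₂₂)) :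
    (charFun g z)ᴴ * charFun g z = 1 := by
  have hz' : star z * z = 1 := by
    rw [Complex.star_def, Complex.conj_mul', hz, Complex.ofReal_one, one_pow]
  rw [conjTranspose_charFun_mul_charFun g (Matrix.mem_unitaryGroup_iff'.mp hg) hD, hz',
    sub_self, zero_smul, sub_zero]
end

section
/- Let α, n be natural numbers and let g = [[A,B],[C,D]] be a colligation of size (α,n) which is a unitary matrix. Let z ∈ ℂ, z ≠ 0, be such that both 1 − z·D and 1 − (conj z)⁻¹·D are invertible. Then the following Riemann–Schwarz type identity holds: χ(g; (conj z)⁻¹) · (χ(g; z))* = 1, i.e. χ(g; (conj z)⁻¹) is the inverse of the conjugate transpose of χ(g; z). -/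
/-!
For a colligation `g = [[A,B],[C,D]]` with `g g* = 1` one has the kernel identity
`1 - χ(g; w) χ(g; z)* = (1 - w z̄) B (1 - wD)⁻¹ (1 - z̄D*)⁻¹ B*`.
At `w = z̄⁻¹` the scalar factor vanishes.
-/

open Matrix

theorem resolvent_kernel_eq {K R : Type*} [CommRing K] [Ring R] [Algebra K R]
    {D E P Q : R} {w c : K} (hP : P * (1 - w • D) = 1) (hQ : (1 - c • E) * Q = 1) :
    1 + w • (P * D) + c • (E * Q) - (w * c) • (P * (1 - D * E) * Q) = (1 - w * c) • (P * Q) := by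
  have hPD : w • (P * D) = P - 1 := by
    rw [← hP, mul_sub, mul_one, mul_smul_comm]; abel
  have hEQ : c • (E * Q) = Q - 1 := by
    rw [← hQ, sub_mul, one_mul, smul_mul_assoc]; abel
  have hPDEQ : (w * c) • (P * (D * E) * Q) = (P - 1) * (Q - 1) := by
    rw [← hPD, ← hEQ, smul_mul_smul_comm, mul_assoc, mul_assoc, mul_assoc]
  rw [mul_sub, mul_one, sub_mul, smul_sub, hPDEQ, hPD, hEQ]
  simp only [sub_mul, mul_sub, one_mul, mul_one]
  module

section Colligation

variable {m n : Type*} [Fintype m] [Fintype n] [DecidableEq m] [DecidableEq n]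

theorem Matrix.mul_conjTranspose_eq_one_iff_toBlocks {R : Type*} [Semiring R] [Star R]
    (g : Matrix (m ⊕ n) (m ⊕ n) R) :
    g * gᴴ = 1 ↔
      g.toBlocks₁₁ * g.toBlocks₁₁ᴴ + g.toBlocks₁₂ * g.toBlocks₁₂ᴴ = 1 ∧
      g.toBlocks₁₁ * g.toBlocks₂₁ᴴ + g.toBlocks₁₂ * g.toBlocks₂₂ᴴ = 0 ∧
      g.toBlocks₂₁ * g.toBlocks₁₁ᴴ + g.toBlocks₂₂ * g.toBlocks₁₂ᴴ = 0 ∧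
      g.toBlocks₂₁ * g.toBlocks₂₁ᴴ + g.toBlocks₂₂ * g.toBlocks₂₂ᴴ = 1 := by
  conv_lhs => rw [← fromBlocks_toBlocks g, fromBlocks_conjTranspose, fromBlocks_multiply,
    ← fromBlocks_one, fromBlocks_inj]

theorem conjTranspose_charFun (g : Matrix (m ⊕ n) (m ⊕ n) ℂ) (z : ℂ) :
    (charFun g z)ᴴ = g.toBlocks₁₁ᴴ +
      star z • (g.toBlocks₂₁ᴴ * ((1 - z • g.toBlocks₂₂)⁻¹)ᴴ * g.toBlocks₁₂ᴴ) := by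
  simp only [charFun, conjTranspose_add, conjTranspose_smul, conjTranspose_mul, Matrix.mul_assoc]

theorem charFun_mul_conjTranspose_charFun {g : Matrix (m ⊕ n) (m ⊕ n) ℂ} (hg : g * gᴴ = 1)
    (w z : ℂ) :
    charFun g w * (charFun g z)ᴴ = 1 - g.toBlocks₁₂ *
      (1 + w • ((1 - w • g.toBlocks₂₂)⁻¹ * g.toBlocks₂₂) +
        star z • (g.toBlocks₂₂ᴴ * ((1 - z • g.toBlocks₂₂)⁻¹)ᴴ) -
        (w * star z) • ((1 - w • g.toBlocks₂₂)⁻¹ * (1 - g.toBlocks₂₂ * g.toBlocks₂₂ᴴ) *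
          ((1 - z • g.toBlocks₂₂)⁻¹)ᴴ)) * g.toBlocks₁₂ᴴ := by
  obtain ⟨hAA, hAC, hCA, hCC⟩ := (mul_conjTranspose_eq_one_iff_toBlocks g).1 hg
  rw [charFun, conjTranspose_charFun]
  set A := g.toBlocks₁₁
  set B := g.toBlocks₁₂
  set C := g.toBlocks₂₁
  set D := g.toBlocks₂₂
  have hAA' : A * Aᴴ = 1 - B * Bᴴ := eq_sub_of_add_eq hAA
  -- The relations take an arbitrary right factor so that they still match after `Matrix.mul_assoc`.
  have hAC' (X : Matrix n m ℂ) : A * (Cᴴ * X) = -(B * (Dᴴ * X)) := by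
    rw [← Matrix.mul_assoc, eq_neg_of_add_eq_zero_left hAC, Matrix.neg_mul, Matrix.mul_assoc]
  have hCA' : C * Aᴴ = -(D * Bᴴ) := eq_neg_of_add_eq_zero_left hCA
  have hCC' (X : Matrix n m ℂ) : C * (Cᴴ * X) = X - D * (Dᴴ * X) := by
    rw [← Matrix.mul_assoc, eq_sub_of_add_eq hCC, Matrix.sub_mul, Matrix.one_mul, Matrix.mul_assoc]
  simp only [Matrix.add_mul, Matrix.mul_add, Matrix.sub_mul, Matrix.mul_sub, Matrix.smul_mul,
    Matrix.mul_smul, Matrix.mul_neg, Matrix.mul_assoc, Matrix.mul_one, hAA', hAC', hCA', hCC']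
  module

theorem one_sub_charFun_mul_conjTranspose_charFun {g : Matrix (m ⊕ n) (m ⊕ n) ℂ}
    (hg : g * gᴴ = 1) {w z : ℂ} (hw : IsUnit (1 - w • g.toBlocks₂₂))
    (hz : IsUnit (1 - z • g.toBlocks₂₂)) :
    1 - charFun g w * (charFun g z)ᴴ = (1 - w * star z) •
      (g.toBlocks₁₂ * (1 - w • g.toBlocks₂₂)⁻¹ * ((1 - z • g.toBlocks₂₂)⁻¹)ᴴ * g.toBlocks₁₂ᴴ) := by
  have hP := nonsing_inv_mul _ ((isUnit_iff_isUnit_det _).1 hw)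
  have hQ : (1 - star z • g.toBlocks₂₂ᴴ) * ((1 - z • g.toBlocks₂₂)⁻¹)ᴴ = 1 := by
    simpa using congrArg conjTranspose (nonsing_inv_mul _ ((isUnit_iff_isUnit_det _).1 hz))
  rw [charFun_mul_conjTranspose_charFun hg, resolvent_kernel_eq hP hQ, sub_sub_cancel,
    Matrix.mul_smul, Matrix.smul_mul]
  simp only [Matrix.mul_assoc]

end Colligation

/-- the Riemann–Schwarz type identity for the characteristic function of a
unitary colligation: `χ(g; (conj z)⁻¹) · χ(g; z)* = 1`. -/
theorem charFun_schwarz {α n : ℕ}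
    (g : Matrix (Fin α ⊕ Fin n) (Fin α ⊕ Fin n) ℂ)
    (hg : g ∈ Matrix.unitaryGroup (Fin α ⊕ Fin n) ℂ)
    (z : ℂ) (hz : z ≠ 0)
    (hD : IsUnit (1 - z • g.toBlocks₂₂))
    (hD' : IsUnit (1 - ((starRingEnd ℂ) z)⁻¹ • g.toBlocks₂₂)) :
    charFun g (((starRingEnd ℂ) z)⁻¹) * (charFun g z)ᴴ = 1 := by
  have hgg : g * gᴴ = 1 := (mem_unitaryGroup_iff).1 hg
  have hkernel := one_sub_charFun_mul_conjTranspose_charFun hgg hD' hD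
  rw [starRingEnd_apply, inv_mul_cancel₀ (star_ne_zero.2 hz), sub_self, zero_smul,
    sub_eq_zero] at hkernel
  exact hkernel.symm
end

section
/- Let α, N, k be natural numbers, let 𝔄 = (g_1,…,g_k) be a multiple colligation of size (α,N,k), and let u be an N×N unitary matrix. Let 𝔄' be the multiple colligation whose j-th matrix is [[1,0],[0,u]]·g_j·[[1,0],[0,u]]⁻¹, with blocks (a_j, b_j·u⁻¹, u·c_j, u·d_j·u⁻¹). Then for every k×k matrix S such that S̃ − d̃ is invertible, the matrix S̃ − d̃' (where d̃' is the block-diagonal matrix of the u·d_j·u⁻¹) is also invertible and χ(𝔄'; S) = χ(𝔄; S). Thus the multivariate characteristic function depends only on the equivalence class of 𝔄 under simultaneous conjugation by matrices diag(1,u). -/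
open Matrix

/-- Block-diagonal matrix `ã` of the `a`-blocks of a multiple colligation. -/
noncomputable def aT {k : ℕ} {A I : Type*} [DecidableEq (Fin k)]
    (g : Fin k → Matrix (A ⊕ I) (A ⊕ I) ℂ) : Matrix (A × Fin k) (A × Fin k) ℂ :=
  blockDiagonal fun j => (g j).toBlocks₁₁

/-- Block-diagonal matrix `b̃` of the `b`-blocks of a multiple colligation. -/
noncomputable def bT {k : ℕ} {A I : Type*}
    (g : Fin k → Matrix (A ⊕ I) (A ⊕ I) ℂ) : Matrix (A × Fin k) (I × Fin k) ℂ :=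
  blockDiagonal fun j => (g j).toBlocks₁₂

/-- Block-diagonal matrix `c̃` of the `c`-blocks of a multiple colligation. -/
noncomputable def cT {k : ℕ} {A I : Type*}
    (g : Fin k → Matrix (A ⊕ I) (A ⊕ I) ℂ) : Matrix (I × Fin k) (A × Fin k) ℂ :=
  blockDiagonal fun j => (g j).toBlocks₂₁

/-- Block-diagonal matrix `d̃` of the `d`-blocks of a multiple colligation. -/
noncomputable def dT {k : ℕ} {A I : Type*}
    (g : Fin k → Matrix (A ⊕ I) (A ⊕ I) ℂ) : Matrix (I × Fin k) (I × Fin k) ℂ :=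
  blockDiagonal fun j => (g j).toBlocks₂₂

/-- `S̃`: the Kronecker-type block matrix whose `(i,j)` block is `s_{ij} · 1`. -/
def sT {k : ℕ} (I : Type*) [DecidableEq I] (S : Matrix (Fin k) (Fin k) ℂ) :
    Matrix (I × Fin k) (I × Fin k) ℂ :=
  Matrix.of fun p q => if p.1 = q.1 then S p.2 q.2 else 0

/-- The multivariate characteristic function `χ(𝔄; S) = ã + b̃·(S̃ − d̃)⁻¹·c̃`. -/
noncomputable def chiM {k : ℕ} {A I : Type*} [Fintype A] [Fintype I] [DecidableEq I]
    (g : Fin k → Matrix (A ⊕ I) (A ⊕ I) ℂ) (S : Matrix (Fin k) (Fin k) ℂ) :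
    Matrix (A × Fin k) (A × Fin k) ℂ :=
  aT g + bT g * (sT I S - dT g)⁻¹ * cT g


/-! Conjugating every `g j` by `diag(1, u)` replaces `b̃, c̃, d̃` by `b̃ Ũ⁻¹, Ũ c̃, Ũ d̃ Ũ⁻¹` with
`Ũ = diag(u, …, u)`. As `Ũ` acts on the `N`-factor and `S̃` on the `k`-factor, they commute, so
`S̃ - d̃' = Ũ (S̃ - d̃) Ũ⁻¹` and the factors `Ũ`, `Ũ⁻¹` cancel in `b̃ (S̃ - d̃)⁻¹ c̃`. -/

section Conjugation

variable {R : Type*} [CommRing R] {m n : Type*} [Fintype m] [DecidableEq m] [Fintype n]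
  [DecidableEq n]

theorem fromBlocks_one_conj_eq {u : Matrix n n R} (hu : IsUnit u) (g : Matrix (m ⊕ n) (m ⊕ n) R) :
    fromBlocks 1 0 0 u * g * (fromBlocks 1 0 0 u)⁻¹ =
      fromBlocks g.toBlocks₁₁ (g.toBlocks₁₂ * u⁻¹) (u * g.toBlocks₂₁) (u * g.toBlocks₂₂ * u⁻¹) := by
  rw [inv_fromBlocks_zero₂₁_of_isUnit_iff 1 0 u (iff_of_true isUnit_one hu),
    ← fromBlocks_toBlocks g]
  simp [fromBlocks_multiply, Matrix.mul_assoc]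

theorem sub_conj_eq_conj_sub {U V s d : Matrix n n R} (hUV : U * V = 1) (hUs : U * s = s * U) :
    s - U * d * V = U * (s - d) * V := by
  rw [Matrix.mul_sub, Matrix.sub_mul, hUs, Matrix.mul_assoc s, hUV, Matrix.mul_one]

theorem isUnit_sub_conj {U V s d : Matrix n n R} (hVU : V * U = 1) (hUs : U * s = s * U)
    (hsd : IsUnit (s - d)) : IsUnit (s - U * d * V) := by
  have hUV : U * V = 1 := mul_eq_one_comm.mp hVU
  rw [sub_conj_eq_conj_sub hUV hUs]
  exact ((IsUnit.of_mul_eq_one V hUV).mul hsd).mul (IsUnit.of_mul_eq_one U hVU)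

/-- No invertibility of `s - d` is needed: `(X * Y)⁻¹ = Y⁻¹ * X⁻¹` holds for the junk inverse
as well. -/
theorem mul_inv_sub_conj_mul {p q : Type*} {U V s d : Matrix n n R} (hVU : V * U = 1)
    (hUs : U * s = s * U) (b : Matrix p n R) (c : Matrix n q R) :
    b * V * (s - U * d * V)⁻¹ * (U * c) = b * (s - d)⁻¹ * c := by
  have hUV : U * V = 1 := mul_eq_one_comm.mp hVU
  rw [sub_conj_eq_conj_sub hUV hUs, Matrix.mul_inv_rev, Matrix.mul_inv_rev, inv_eq_left_inv hUV,
    inv_eq_left_inv hVU]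
  simp only [Matrix.mul_assoc, ← Matrix.mul_assoc V U, hVU, Matrix.one_mul]

theorem blockDiagonal_const_inv_mul {o : Type*} [Fintype o] [DecidableEq o] {u : Matrix n n R}
    (hu : IsUnit u) : blockDiagonal (fun _ : o => u⁻¹) * blockDiagonal (fun _ : o => u) = 1 := by
  rw [← blockDiagonal_mul, nonsing_inv_mul u ((isUnit_iff_isUnit_det u).mp hu)]
  exact blockDiagonal_one

end Conjugation

section Colligation

variable {k : ℕ} {A I : Type*} [Fintype A] [DecidableEq A] [Fintype I] [DecidableEq I]

theorem sT_mul_blockDiagonal_const (S : Matrix (Fin k) (Fin k) ℂ) (u : Matrix I I ℂ) :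
    sT I S * blockDiagonal (fun _ : Fin k => u) = blockDiagonal (fun _ : Fin k => u) * sT I S := by
  ext ⟨i, j⟩ ⟨i', j'⟩
  simp only [sT, mul_apply, blockDiagonal_apply, of_apply, Fintype.sum_prod_type]
  simp [mul_comm]

variable {u : Matrix I I ℂ} (hu : IsUnit u) (g : Fin k → Matrix (A ⊕ I) (A ⊕ I) ℂ)
include hu

theorem aT_conj : aT (fun j => fromBlocks 1 0 0 u * g j * (fromBlocks 1 0 0 u)⁻¹) = aT g := by
  simp only [aT, fromBlocks_one_conj_eq hu, toBlocks_fromBlocks₁₁]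

theorem bT_conj : bT (fun j => fromBlocks 1 0 0 u * g j * (fromBlocks 1 0 0 u)⁻¹) =
    bT g * blockDiagonal (fun _ : Fin k => u⁻¹) := by
  simp only [bT, fromBlocks_one_conj_eq hu, toBlocks_fromBlocks₁₂, blockDiagonal_mul]

theorem cT_conj : cT (fun j => fromBlocks 1 0 0 u * g j * (fromBlocks 1 0 0 u)⁻¹) =
    blockDiagonal (fun _ : Fin k => u) * cT g := by
  simp only [cT, fromBlocks_one_conj_eq hu, toBlocks_fromBlocks₂₁, blockDiagonal_mul]

theorem dT_conj : dT (fun j => fromBlocks 1 0 0 u * g j * (fromBlocks 1 0 0 u)⁻¹) =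
    blockDiagonal (fun _ : Fin k => u) * dT g * blockDiagonal (fun _ : Fin k => u⁻¹) := by
  simp only [dT, fromBlocks_one_conj_eq hu, toBlocks_fromBlocks₂₂, blockDiagonal_mul]

theorem isUnit_sT_sub_dT_conj {S : Matrix (Fin k) (Fin k) ℂ} (hS : IsUnit (sT I S - dT g)) :
    IsUnit (sT I S - dT (fun j => fromBlocks 1 0 0 u * g j * (fromBlocks 1 0 0 u)⁻¹)) := by
  rw [dT_conj hu]
  exact isUnit_sub_conj (blockDiagonal_const_inv_mul hu) (sT_mul_blockDiagonal_const S u).symm hS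

theorem chiM_conj (S : Matrix (Fin k) (Fin k) ℂ) :
    chiM (fun j => fromBlocks 1 0 0 u * g j * (fromBlocks 1 0 0 u)⁻¹) S = chiM g S := by
  rw [chiM, chiM, aT_conj hu, bT_conj hu, cT_conj hu, dT_conj hu,
    mul_inv_sub_conj_mul (blockDiagonal_const_inv_mul hu) (sT_mul_blockDiagonal_const S u).symm]

end Colligation

/-- the multivariate characteristic function is invariant under simultaneous
conjugation of the multiple colligation by a block-diagonal unitary `diag(1, u)`. -/
theorem chiM_conj_invariant {α N k : ℕ}
    (g : Fin k → Matrix (Fin α ⊕ Fin N) (Fin α ⊕ Fin N) ℂ)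
    (u : Matrix (Fin N) (Fin N) ℂ) (hu : u ∈ Matrix.unitaryGroup (Fin N) ℂ)
    (S : Matrix (Fin k) (Fin k) ℂ)
    (hS : IsUnit (sT (Fin N) S - dT g)) :
    IsUnit (sT (Fin N) S
        - dT (fun j => fromBlocks 1 0 0 u * g j * (fromBlocks 1 0 0 u)⁻¹)) ∧
      chiM (fun j => fromBlocks 1 0 0 u * g j * (fromBlocks 1 0 0 u)⁻¹) S = chiM g S := by
  have hu' : IsUnit u := Unitary.isUnit_coe (U := ⟨u, hu⟩)
  exact ⟨isUnit_sT_sub_dT_conj hu' g hS, chiM_conj hu' g S⟩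
end

section
/- Let α, N, M, k be natural numbers, let 𝔄 = (g_1,…,g_k) be a multiple colligation of size (α,N,k) and 𝔓 = (h_1,…,h_k) a multiple colligation of size (α,M,k). Let 𝔄∘𝔓 be the multiple colligation of size (α,N+M,k) whose j-th matrix is g_j∘h_j (the product of colligations). Let S be a k×k matrix such that both S̃_N − d̃_𝔄 and S̃_M − d̃_𝔓 are invertible (where S̃_N, S̃_M are the Kronecker products of S with the identity of size N, M, and d̃_𝔄, d̃_𝔓 are the respective block-diagonal d-blocks). Then S̃_{N+M} − d̃_{𝔄∘𝔓} is invertible and χ(𝔄; S) · χ(𝔓; S) = χ(𝔄∘𝔓; S). -/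
open Matrix

/-!
`χ(𝔄; S) = ã + b̃ (S̃ − d̃)⁻¹ c̃` is a transfer function, and the product of two transfer
functions is the transfer function of their cascade, whose state matrix is block upper
triangular with the two state matrices on the diagonal, hence invertible when they are.
Once the state space `(N ⊕ M) × k` of `𝔄∘𝔓` is regrouped as `(N × k) ⊕ (M × k)`, its
blocks `ã, b̃, c̃, S̃ − d̃` are exactly those of this cascade.
-/

section TransferFunction

variable {R : Type*} [CommRing R] {l m n I J : Type*} [Fintype m] [Fintype I] [Fintype J]
  [DecidableEq I] [DecidableEq J]

theorem add_mul_inv_mul_mul_add_mul_inv_mul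
    (a₁ : Matrix l m R) (b₁ : Matrix l I R) (c₁ : Matrix I m R) (E : Matrix I I R)
    (a₂ : Matrix m n R) (b₂ : Matrix m J R) (c₂ : Matrix J n R) (F : Matrix J J R)
    (hE : IsUnit E) (hF : IsUnit F) :
    (a₁ + b₁ * E⁻¹ * c₁) * (a₂ + b₂ * F⁻¹ * c₂) =
      a₁ * a₂ + fromCols b₁ (a₁ * b₂) * (fromBlocks E (-(c₁ * b₂)) 0 F)⁻¹ *
        fromRows (c₁ * a₂) c₂ := by
  rw [inv_fromBlocks_zero₂₁_of_isUnit_iff _ _ _ (iff_of_true hE hF),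
    fromCols_mul_fromBlocks, fromCols_mul_fromRows]
  simp only [Matrix.mul_zero, add_zero, Matrix.neg_mul, Matrix.mul_neg, neg_neg,
    Matrix.mul_add, Matrix.add_mul, Matrix.mul_assoc]
  abel

end TransferFunction

section Colligation

variable {k : ℕ} {A I J : Type*} [Fintype A]
  (g : Fin k → Matrix (A ⊕ I) (A ⊕ I) ℂ) (h : Fin k → Matrix (A ⊕ J) (A ⊕ J) ℂ)

theorem aT_colProd : aT (fun j => colProd (g j) (h j)) = aT g * aT h := by
  simp only [aT, ← blockDiagonal_mul]
  rfl

theorem bT_colProd :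
    bT (fun j => colProd (g j) (h j)) =
      (fromCols (bT g) (aT g * bT h)).submatrix id (Equiv.sumProdDistrib I J (Fin k)) := by
  ext ⟨a, j₁⟩ ⟨i | i, j₂⟩ <;>
    simp [aT, bT, ← blockDiagonal_mul, blockDiagonal_apply, colProd, Equiv.sumProdDistrib,
      fromCols]

theorem cT_colProd :
    cT (fun j => colProd (g j) (h j)) =
      (fromRows (cT g * aT h) (cT h)).submatrix (Equiv.sumProdDistrib I J (Fin k)) id := by
  ext ⟨i | i, j₁⟩ ⟨a, j₂⟩ <;>
    simp [aT, cT, ← blockDiagonal_mul, blockDiagonal_apply, colProd, Equiv.sumProdDistrib]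

theorem sT_sub_dT_colProd [DecidableEq I] [DecidableEq J] (S : Matrix (Fin k) (Fin k) ℂ) :
    sT (I ⊕ J) S - dT (fun j => colProd (g j) (h j)) =
      (fromBlocks (sT I S - dT g) (-(cT g * bT h)) 0 (sT J S - dT h)).submatrix
        (Equiv.sumProdDistrib I J (Fin k)) (Equiv.sumProdDistrib I J (Fin k)) := by
  ext ⟨i | i, j₁⟩ ⟨i' | i', j₂⟩ <;>
    simp [sT, bT, cT, dT, ← blockDiagonal_mul, blockDiagonal_apply, colProd,
      Equiv.sumProdDistrib]

end Colligation

/-- multiplicativity of the multivariate characteristic function: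
`χ(𝔄; S) · χ(𝔓; S) = χ(𝔄∘𝔓; S)`, where `𝔄∘𝔓` is the elementwise product of
multiple colligations. -/
theorem chiM_mul {α N M k : ℕ}
    (g : Fin k → Matrix (Fin α ⊕ Fin N) (Fin α ⊕ Fin N) ℂ)
    (h : Fin k → Matrix (Fin α ⊕ Fin M) (Fin α ⊕ Fin M) ℂ)
    (S : Matrix (Fin k) (Fin k) ℂ)
    (hg : IsUnit (sT (Fin N) S - dT g)) (hh : IsUnit (sT (Fin M) S - dT h)) :
    IsUnit (sT (Fin N ⊕ Fin M) S - dT (fun j => colProd (g j) (h j))) ∧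
      chiM g S * chiM h S = chiM (fun j => colProd (g j) (h j)) S := by
  rw [sT_sub_dT_colProd]
  refine ⟨(isUnit_submatrix_equiv _ _).mpr (isUnit_fromBlocks_zero₂₁.mpr ⟨hg, hh⟩), ?_⟩
  rw [chiM, chiM, chiM, add_mul_inv_mul_mul_add_mul_inv_mul _ _ _ _ _ _ _ _ hg hh,
    sT_sub_dT_colProd, aT_colProd, bT_colProd, cT_colProd, inv_submatrix_equiv,
    submatrix_mul_equiv, submatrix_mul_equiv, submatrix_id_id]
end

section
/- Let α, N, k be natural numbers and let 𝔄 = (g_1,…,g_k) be a multiple colligation of size (α,N,k) in which every g_j is a unitary matrix. Let S be a k×k complex matrix which is a contraction (for every v ∈ ℂ^k, ‖S·v‖ ≤ ‖v‖ in Euclidean norm) and such that S̃ − d̃ is invertible. Then the characteristic function is expanding: for every vector p ∈ ℂ^{kα}, ‖χ(𝔄; S)·p‖ ≥ ‖p‖ in the Euclidean norm. In particular χ(𝔄; S) is invertible and ‖χ(𝔄; S)⁻¹·q‖ ≤ ‖q‖ for every q ∈ ℂ^{kα}. -/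
open Matrix

/-! Put `h = (S̃ - d̃)⁻¹ c̃ p`, so that `χ p = ã p + b̃ h` and `S̃ h = c̃ p + d̃ h`. Each `g_j` is
unitary and maps the `j`-th slices `(p_j, h_j)` to `(a_j p_j + b_j h_j, c_j p_j + d_j h_j)`, so
`‖p‖² + ‖h‖² = ‖χ p‖² + ‖S̃ h‖²`. As `S̃` acts as `S` on every slice `l ↦ h (i, l)`, it is a
contraction, whence `‖p‖ ≤ ‖χ p‖`. An expanding matrix is injective, hence invertible, and its
inverse is a contraction. -/

section Expanding

variable {𝕜 : Type*} [RCLike 𝕜] {n : Type*} [Fintype n] [DecidableEq n] {M : Matrix n n 𝕜}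

theorem Matrix.isUnit_of_norm_le_norm_toEuclideanLin
    (hM : ∀ p, ‖p‖ ≤ ‖toEuclideanLin M p‖) : IsUnit M := by
  rw [← mulVec_injective_iff_isUnit]
  intro u v huv
  have h := hM (WithLp.toLp 2 (u - v))
  rw [toLpLin_toLp, toLin'_apply, mulVec_sub, huv, sub_self, WithLp.toLp_zero, norm_zero,
    norm_le_zero_iff, WithLp.toLp_eq_zero] at h
  exact sub_eq_zero.mp h

theorem Matrix.norm_toEuclideanLin_inv_le (hM : ∀ p, ‖p‖ ≤ ‖toEuclideanLin M p‖)
    (q : EuclideanSpace 𝕜 n) : ‖toEuclideanLin M⁻¹ q‖ ≤ ‖q‖ := by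
  have hdet := (isUnit_iff_isUnit_det M).mp (isUnit_of_norm_le_norm_toEuclideanLin hM)
  calc ‖toEuclideanLin M⁻¹ q‖ ≤ ‖toEuclideanLin M (toEuclideanLin M⁻¹ q)‖ := hM _
    _ = ‖q‖ := by
      rw [← LinearMap.comp_apply, ← toLpLin_mul_same, mul_nonsing_inv _ hdet, toLpLin_one,
        LinearMap.id_apply]

end Expanding

section L2NormSq

variable {ι X Y : Type*} [Fintype ι] [Fintype X] [Fintype Y]

noncomputable def l2NormSq (v : ι → ℂ) : ℝ := ∑ i, ‖v i‖ ^ 2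

theorem l2NormSq_eq_re_star_dotProduct (v : ι → ℂ) : l2NormSq v = (star v ⬝ᵥ v).re := by
  simp [l2NormSq, dotProduct, Complex.re_sum, mul_comm, Complex.mul_conj, Complex.sq_norm]

theorem EuclideanSpace.norm_sq_eq_l2NormSq (v : EuclideanSpace ℂ ι) :
    ‖v‖ ^ 2 = l2NormSq (WithLp.ofLp v) :=
  EuclideanSpace.norm_sq_eq _

theorem l2NormSq_unitary_mulVec [DecidableEq ι] {U : Matrix ι ι ℂ}
    (hU : U ∈ unitaryGroup ι ℂ) (v : ι → ℂ) : l2NormSq (U *ᵥ v) = l2NormSq v := by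
  rw [l2NormSq_eq_re_star_dotProduct, l2NormSq_eq_re_star_dotProduct, star_mulVec,
    dotProduct_mulVec, vecMul_vecMul, ← star_eq_conjTranspose, mem_unitaryGroup_iff'.mp hU,
    vecMul_one]

theorem l2NormSq_sum_elim (u : X → ℂ) (v : Y → ℂ) :
    l2NormSq (Sum.elim u v) = l2NormSq u + l2NormSq v :=
  Fintype.sum_sum_type _

theorem l2NormSq_prod (v : X × Y → ℂ) : l2NormSq v = ∑ x, l2NormSq fun y => v (x, y) :=
  Fintype.sum_prod_type _

theorem l2NormSq_prod_right (v : X × Y → ℂ) : l2NormSq v = ∑ y, l2NormSq fun x => v (x, y) :=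
  Fintype.sum_prod_type_right _

theorem l2NormSq_toBlocks_mulVec [DecidableEq X] [DecidableEq Y]
    {U : Matrix (X ⊕ Y) (X ⊕ Y) ℂ} (hU : U ∈ unitaryGroup (X ⊕ Y) ℂ) (u : X → ℂ) (v : Y → ℂ) :
    l2NormSq (U.toBlocks₁₁ *ᵥ u + U.toBlocks₁₂ *ᵥ v) +
      l2NormSq (U.toBlocks₂₁ *ᵥ u + U.toBlocks₂₂ *ᵥ v) = l2NormSq u + l2NormSq v := by
  have hblocks : U *ᵥ Sum.elim u v = Sum.elim (U.toBlocks₁₁ *ᵥ u + U.toBlocks₁₂ *ᵥ v)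
      (U.toBlocks₂₁ *ᵥ u + U.toBlocks₂₂ *ᵥ v) := by
    conv_lhs => rw [← fromBlocks_toBlocks U]
    exact fromBlocks_mulVec _ _ _ _ _
  rw [← l2NormSq_sum_elim, ← l2NormSq_sum_elim, ← hblocks, l2NormSq_unitary_mulVec hU]

end L2NormSq

theorem Matrix.blockDiagonal_mulVec_apply {o X Y R : Type*} [Fintype o] [DecidableEq o]
    [Fintype Y] [NonUnitalNonAssocSemiring R] (M : o → Matrix X Y R) (v : Y × o → R)
    (x : X) (j : o) : (blockDiagonal M *ᵥ v) (x, j) = (M j *ᵥ fun y => v (y, j)) x := by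
  simp [mulVec, dotProduct, Fintype.sum_prod_type_right, blockDiagonal_apply, ite_mul,
    Finset.sum_ite_eq]

theorem sT_mulVec_apply {k : ℕ} {I : Type*} [Fintype I] [DecidableEq I]
    (S : Matrix (Fin k) (Fin k) ℂ) (v : I × Fin k → ℂ) (i : I) (j : Fin k) :
    (sT I S *ᵥ v) (i, j) = (S *ᵥ fun l => v (i, l)) j := by
  simp [sT, mulVec, dotProduct, Fintype.sum_prod_type, ite_mul, Finset.sum_ite_eq]

section Colligation

variable {k : ℕ} {A I : Type*} [Fintype A] [DecidableEq A] [Fintype I] [DecidableEq I]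
  {g : Fin k → Matrix (A ⊕ I) (A ⊕ I) ℂ}

theorem l2NormSq_colligation (hg : ∀ j, g j ∈ unitaryGroup (A ⊕ I) ℂ)
    (p : A × Fin k → ℂ) (h : I × Fin k → ℂ) :
    l2NormSq (aT g *ᵥ p + bT g *ᵥ h) + l2NormSq (cT g *ᵥ p + dT g *ᵥ h) =
      l2NormSq p + l2NormSq h := by
  simp only [l2NormSq_prod_right (_ + _), l2NormSq_prod_right p, l2NormSq_prod_right h,
    ← Finset.sum_add_distrib, Pi.add_apply, aT, bT, cT, dT, blockDiagonal_mulVec_apply]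
  exact Finset.sum_congr rfl fun j _ => l2NormSq_toBlocks_mulVec (hg j) _ _

theorem l2NormSq_sT_mulVec_le {S : Matrix (Fin k) (Fin k) ℂ}
    (hS : ∀ w, l2NormSq (S *ᵥ w) ≤ l2NormSq w) (h : I × Fin k → ℂ) :
    l2NormSq (sT I S *ᵥ h) ≤ l2NormSq h := by
  simp only [l2NormSq_prod (sT I S *ᵥ h), l2NormSq_prod h, sT_mulVec_apply]
  exact Finset.sum_le_sum fun i _ => hS _

theorem l2NormSq_le_of_colligation (hg : ∀ j, g j ∈ unitaryGroup (A ⊕ I) ℂ)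
    {S : Matrix (Fin k) (Fin k) ℂ} (hS : ∀ w, l2NormSq (S *ᵥ w) ≤ l2NormSq w)
    {p : A × Fin k → ℂ} {h : I × Fin k → ℂ} (hh : sT I S *ᵥ h = cT g *ᵥ p + dT g *ᵥ h) :
    l2NormSq p ≤ l2NormSq (aT g *ᵥ p + bT g *ᵥ h) := by
  have hunitary := l2NormSq_colligation hg p h
  have hcontr := l2NormSq_sT_mulVec_le hS h
  rw [hh] at hcontr
  linarith

theorem l2NormSq_le_l2NormSq_chiM_mulVec (hg : ∀ j, g j ∈ unitaryGroup (A ⊕ I) ℂ)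
    {S : Matrix (Fin k) (Fin k) ℂ} (hS : ∀ w, l2NormSq (S *ᵥ w) ≤ l2NormSq w)
    (hinv : IsUnit (sT I S - dT g)) (p : A × Fin k → ℂ) :
    l2NormSq p ≤ l2NormSq (chiM g S *ᵥ p) := by
  set h := (sT I S - dT g)⁻¹ *ᵥ cT g *ᵥ p
  have hh : sT I S *ᵥ h = cT g *ᵥ p + dT g *ᵥ h := by
    rw [← sub_eq_iff_eq_add, ← sub_mulVec, mulVec_mulVec,
      mul_nonsing_inv _ ((isUnit_iff_isUnit_det _).mp hinv), one_mulVec]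
  have hchi : chiM g S *ᵥ p = aT g *ᵥ p + bT g *ᵥ h := by
    simp only [h, chiM, add_mulVec, mulVec_mulVec, Matrix.mul_assoc]
  rw [hchi]
  exact l2NormSq_le_of_colligation hg hS hh

end Colligation

/-- for a multiple colligation of unitary matrices and a contractive `S`
with `S̃ − d̃` invertible, the characteristic function `χ(𝔄; S)` is expanding; in
particular it is invertible and its inverse is a contraction. -/
theorem chiM_expanding {α N k : ℕ}
    (g : Fin k → Matrix (Fin α ⊕ Fin N) (Fin α ⊕ Fin N) ℂ)
    (hg : ∀ j, g j ∈ Matrix.unitaryGroup (Fin α ⊕ Fin N) ℂ)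
    (S : Matrix (Fin k) (Fin k) ℂ)
    (hScontr : ∀ v : EuclideanSpace ℂ (Fin k), ‖Matrix.toEuclideanLin S v‖ ≤ ‖v‖)
    (hinv : IsUnit (sT (Fin N) S - dT g)) :
    (∀ p : EuclideanSpace ℂ (Fin α × Fin k),
        ‖p‖ ≤ ‖Matrix.toEuclideanLin (chiM g S) p‖) ∧
      IsUnit (chiM g S) ∧
      ∀ q : EuclideanSpace ℂ (Fin α × Fin k),
        ‖Matrix.toEuclideanLin (chiM g S)⁻¹ q‖ ≤ ‖q‖ := by
  have hS : ∀ w, l2NormSq (S *ᵥ w) ≤ l2NormSq w := fun w => by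
    have := hScontr (WithLp.toLp 2 w)
    rwa [← sq_le_sq₀ (norm_nonneg _) (norm_nonneg _), EuclideanSpace.norm_sq_eq_l2NormSq,
      EuclideanSpace.norm_sq_eq_l2NormSq, ofLp_toLpLin] at this
  have hexpand : ∀ p : EuclideanSpace ℂ (Fin α × Fin k),
      ‖p‖ ≤ ‖Matrix.toEuclideanLin (chiM g S) p‖ := fun p => by
    rw [← sq_le_sq₀ (norm_nonneg _) (norm_nonneg _), EuclideanSpace.norm_sq_eq_l2NormSq,
      EuclideanSpace.norm_sq_eq_l2NormSq, ofLp_toLpLin]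
    exact l2NormSq_le_l2NormSq_chiM_mulVec hg hS hinv _
  exact ⟨hexpand, isUnit_of_norm_le_norm_toEuclideanLin hexpand,
    norm_toEuclideanLin_inv_le hexpand⟩
end

section
/- Let α, N, k be natural numbers and let 𝔄 = (g_1,…,g_k) be a multiple colligation of size (α,N,k) in which every g_j is a unitary matrix. Let S be a k×k unitary matrix such that S̃ − d̃ is invertible. Then χ(𝔄; S) is a unitary (kα)×(kα) matrix, i.e. χ(𝔄; S)* · χ(𝔄; S) = 1. -/
/-!
Put `Y = (S̃ - d̃)⁻¹ c̃` and `χ = χ(𝔄; S)`. Then `c̃ + d̃ Y = S̃ Y`, so the colligation matrix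
`G = [[ã, b̃], [c̃, d̃]]` maps the column `[1; Y]` to `[χ; S̃ Y]`. Since `G` (a reindexed
block-diagonal matrix of the unitaries `g_j`) and `S̃ = 1 ⊗ S` are isometries, comparing Gram
matrices gives `1 + Y*Y = χ*χ + Y*Y`.
-/

open Matrix

namespace Matrix

variable {R l m n : Type*} [CommRing R] [StarRing R] [Fintype l] [Fintype m] [Fintype n]
  [DecidableEq m] [DecidableEq n]

omit [Fintype m] [DecidableEq m] [DecidableEq n] in
lemma conjTranspose_fromRows_mul_self (X : Matrix l m R) (Y : Matrix n m R) :
    (fromRows X Y)ᴴ * fromRows X Y = Xᴴ * X + Yᴴ * Y := by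
  rw [conjTranspose_fromRows_eq_fromCols_conjTranspose, fromCols_mul_fromRows]

theorem conjTranspose_mul_self_eq_one_of_fromBlocks_isometry
    {A : Matrix l m R} {B : Matrix l n R} {C : Matrix n m R} {D U : Matrix n n R}
    (hG : (fromBlocks A B C D)ᴴ * fromBlocks A B C D = 1) (hU : Uᴴ * U = 1)
    (hUD : IsUnit (U - D)) :
    (A + B * (U - D)⁻¹ * C)ᴴ * (A + B * (U - D)⁻¹ * C) = 1 := by
  set χ := A + B * (U - D)⁻¹ * C
  set Y := (U - D)⁻¹ * C
  set G := fromBlocks A B C D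
  set V := fromRows (1 : Matrix m m R) Y
  have hY : C + D * Y = U * Y := by
    have : (U - D) * Y = C :=
      mul_nonsing_inv_cancel_left _ _ ((isUnit_iff_isUnit_det _).mp hUD)
    rw [← this, Matrix.sub_mul]
    abel
  have hGV : G * V = fromRows χ (U * Y) := by
    rw [fromBlocks_mul_fromRows, Matrix.mul_one, Matrix.mul_one, hY, ← Matrix.mul_assoc]
  have hUY : (U * Y)ᴴ * (U * Y) = Yᴴ * Y := by
    rw [conjTranspose_mul, Matrix.mul_assoc, ← Matrix.mul_assoc Uᴴ, hU, Matrix.one_mul]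
  have hgram : χᴴ * χ + Yᴴ * Y = 1 + Yᴴ * Y :=
    calc χᴴ * χ + Yᴴ * Y
        = (G * V)ᴴ * (G * V) := by rw [hGV, conjTranspose_fromRows_mul_self, hUY]
      _ = Vᴴ * V := by
          rw [conjTranspose_mul, Matrix.mul_assoc, ← Matrix.mul_assoc _ G, hG, Matrix.one_mul]
      _ = 1 + Yᴴ * Y := by
          rw [conjTranspose_fromRows_mul_self, conjTranspose_one, Matrix.one_mul]
  exact add_right_cancel hgram

end Matrix

section Colligation

variable {k : ℕ} {A I : Type*}

lemma fromBlocks_aT_bT_cT_dT (g : Fin k → Matrix (A ⊕ I) (A ⊕ I) ℂ) :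
    fromBlocks (aT g) (bT g) (cT g) (dT g) =
      (blockDiagonal g).submatrix (Equiv.sumProdDistrib A I (Fin k)).symm
        (Equiv.sumProdDistrib A I (Fin k)).symm := by
  ext (⟨a, i⟩ | ⟨a, i⟩) (⟨b, j⟩ | ⟨b, j⟩) <;>
    simp [aT, bT, cT, dT, blockDiagonal_apply, toBlocks₁₁, toBlocks₁₂, toBlocks₂₁,
      toBlocks₂₂]

lemma fromBlocks_aT_bT_cT_dT_isometry [Fintype A] [Fintype I] [DecidableEq A] [DecidableEq I]
    {g : Fin k → Matrix (A ⊕ I) (A ⊕ I) ℂ} (hg : ∀ j, (g j)ᴴ * g j = 1) :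
    (fromBlocks (aT g) (bT g) (cT g) (dT g))ᴴ * fromBlocks (aT g) (bT g) (cT g) (dT g) = 1 := by
  rw [fromBlocks_aT_bT_cT_dT, conjTranspose_submatrix, submatrix_mul_equiv,
    blockDiagonal_conjTranspose, ← blockDiagonal_mul, funext hg, ← Pi.one_def,
    blockDiagonal_one, submatrix_one_equiv]

open Kronecker in
lemma sT_eq_one_kronecker [DecidableEq I] (S : Matrix (Fin k) (Fin k) ℂ) :
    sT I S = (1 : Matrix I I ℂ) ⊗ₖ S := by
  ext ⟨i, p⟩ ⟨j, q⟩
  simp [sT, one_apply, ite_mul]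

lemma sT_conjTranspose_mul_self [Fintype I] [DecidableEq I] {S : Matrix (Fin k) (Fin k) ℂ}
    (hS : Sᴴ * S = 1) :
    (sT I S)ᴴ * sT I S = 1 := by
  rw [sT_eq_one_kronecker, conjTranspose_kronecker, ← mul_kronecker_mul, conjTranspose_one,
    Matrix.one_mul, hS, one_kronecker_one]

end Colligation

/-- for a multiple colligation of unitary matrices and a unitary `S` with
`S̃ − d̃` invertible, the characteristic function `χ(𝔄; S)` is unitary. -/
theorem chiM_unitary {α N k : ℕ}
    (g : Fin k → Matrix (Fin α ⊕ Fin N) (Fin α ⊕ Fin N) ℂ)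
    (hg : ∀ j, g j ∈ Matrix.unitaryGroup (Fin α ⊕ Fin N) ℂ)
    (S : Matrix (Fin k) (Fin k) ℂ) (hS : S ∈ Matrix.unitaryGroup (Fin k) ℂ)
    (hinv : IsUnit (sT (Fin N) S - dT g)) :
    (chiM g S)ᴴ * chiM g S = 1 :=
  conjTranspose_mul_self_eq_one_of_fromBlocks_isometry
    (fromBlocks_aT_bT_cT_dT_isometry fun j => mem_unitaryGroup_iff'.mp (hg j))
    (sT_conjTranspose_mul_self (mem_unitaryGroup_iff'.mp hS)) hinv
end

section
/- Let α, N, M, k be natural numbers, let 𝔄 = (g_1,…,g_k) be a multiple colligation of size (α,N,k) and 𝔓 = (h_1,…,h_k) a multiple colligation of size (α,M,k), and let 𝔄∘𝔓 be the multiple colligation of size (α,N+M,k) whose j-th matrix is g_j∘h_j. Let L be a ℂ-linear subspace of ℂ^k × ℂ^k. Then the linear relations satisfy X(𝔄∘𝔓; L) ⊇ X(𝔄; L) ∘ X(𝔓; L); explicitly, if r, p, q : Fin k → ℂ^α are such that (r, p) ∈ X(𝔓; L) and (p, q) ∈ X(𝔄; L), then (r, q) ∈ X(𝔄∘𝔓;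 L). -/
open Matrix

/-- The linear relation `X(𝔄; L)` associated to a multiple colligation `𝔄` and a subspace
`L ⊆ ℂ^k × ℂ^k`: `(p, q) ∈ X(𝔄; L)` iff there exist `x`, `y` with
`q_j = a_j p_j + b_j x_j`, `y_j = c_j p_j + d_j x_j`, and for each coordinate `t` the pair
`((x_j(t))_j, (y_j(t))_j)` belongs to `L`. -/
def XRel {k α : ℕ} {I : Type*} [Fintype I]
    (g : Fin k → Matrix (Fin α ⊕ I) (Fin α ⊕ I) ℂ)
    (L : Submodule ℂ ((Fin k → ℂ) × (Fin k → ℂ)))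
    (p q : Fin k → Fin α → ℂ) : Prop :=
  ∃ x y : Fin k → I → ℂ,
    (∀ j, q j = (g j).toBlocks₁₁.mulVec (p j) + (g j).toBlocks₁₂.mulVec (x j)) ∧
    (∀ j, y j = (g j).toBlocks₂₁.mulVec (p j) + (g j).toBlocks₂₂.mulVec (x j)) ∧
    ∀ t : I, ((fun j => x j t, fun j => y j t) : (Fin k → ℂ) × (Fin k → ℂ)) ∈ L

/-!
The product colligation runs `h` first and feeds its output into `g`: on the input `r` and the
internal state `Sum.elim x x'` it produces `q = a p + b x` and `Sum.elim (c p + d x) y'`, where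
`(p, y')` is what `h` produces from `(r, x')`. Hence the concatenations of the internal states
witnessing `(r, p) ∈ X(𝔓; L)` and `(p, q) ∈ X(𝔄; L)` witness `(r, q) ∈ X(𝔄∘𝔓; L)`, coordinatewise.
-/

section colProd

variable {A I J : Type*} [Fintype A] [Fintype I] [Fintype J]
  (g : Matrix (A ⊕ I) (A ⊕ I) ℂ) (h : Matrix (A ⊕ J) (A ⊕ J) ℂ)
  (r : A → ℂ) (x : I → ℂ) (x' : J → ℂ)

theorem colProd_toBlocks₁_mulVec :
    (colProd g h).toBlocks₁₁ *ᵥ r + (colProd g h).toBlocks₁₂ *ᵥ Sum.elim x x' =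
      g.toBlocks₁₁ *ᵥ (h.toBlocks₁₁ *ᵥ r + h.toBlocks₁₂ *ᵥ x') + g.toBlocks₁₂ *ᵥ x := by
  simp only [colProd, toBlocks_fromBlocks₁₁, toBlocks_fromBlocks₁₂, fromCols_mulVec_sumElim,
    mulVec_add, mulVec_mulVec]
  abel

theorem colProd_toBlocks₂_mulVec :
    (colProd g h).toBlocks₂₁ *ᵥ r + (colProd g h).toBlocks₂₂ *ᵥ Sum.elim x x' =
      Sum.elim (g.toBlocks₂₁ *ᵥ (h.toBlocks₁₁ *ᵥ r + h.toBlocks₁₂ *ᵥ x') + g.toBlocks₂₂ *ᵥ x)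
        (h.toBlocks₂₁ *ᵥ r + h.toBlocks₂₂ *ᵥ x') := by
  ext (t | t)
  · simp only [colProd, toBlocks_fromBlocks₂₁, toBlocks_fromBlocks₂₂, fromRows_mulVec,
      fromBlocks_mulVec, Sum.elim_comp_inl, Sum.elim_comp_inr, zero_mulVec, zero_add,
      Pi.add_apply, Sum.elim_inl, mulVec_add, mulVec_mulVec]
    abel
  · simp [colProd, fromRows_mulVec, fromBlocks_mulVec, mulVec_add]

end colProd

/-- the linear relation of the product of multiple colligations contains the
product of the linear relations: `X(𝔄∘𝔓; L) ⊇ X(𝔄; L) ∘ X(𝔓; L)`. -/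
theorem XRel_colProd {α N M k : ℕ}
    (g : Fin k → Matrix (Fin α ⊕ Fin N) (Fin α ⊕ Fin N) ℂ)
    (h : Fin k → Matrix (Fin α ⊕ Fin M) (Fin α ⊕ Fin M) ℂ)
    (L : Submodule ℂ ((Fin k → ℂ) × (Fin k → ℂ)))
    (r p q : Fin k → Fin α → ℂ)
    (hrp : XRel h L r p) (hpq : XRel g L p q) :
    XRel (fun j => colProd (g j) (h j)) L r q := by
  obtain ⟨xh, yh, hp, hyh, hLh⟩ := hrp
  obtain ⟨xg, yg, hq, hyg, hLg⟩ := hpq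
  refine ⟨fun j => Sum.elim (xg j) (xh j), fun j => Sum.elim (yg j) (yh j),
    fun j => ?_, fun j => ?_, Sum.forall.2 ⟨hLg, hLh⟩⟩
  · rw [colProd_toBlocks₁_mulVec, ← hp j, hq j]
  · rw [colProd_toBlocks₂_mulVec, ← hp j, ← hyg j, ← hyh j]
end

section
/- Let α, N, k be natural numbers and let 𝔄 = (g_1,…,g_k) be a multiple colligation of size (α,N,k) in which every g_j is a unitary matrix. Let L be a ℂ-linear subspace of ℂ^k × ℂ^k on which the Hermitian form M(v⊕w) = Σ_{i=1}^k |v_i|² − Σ_{i=1}^k |w_i|² is positive definite (M(v⊕w) > 0 for every nonzero (v,w) ∈ L). Then the Hermitian form 𝓜(p⊕q) = Σ_{j=1}^k ‖p_j‖² − Σ_{j=1}^k ‖q_j‖² is negative semidefinite on the linear relation X(𝔄; L): for every (p, q) ∈ X(𝔄; L), Σ_{j=1}^k ‖p_j‖² ≤ Σ_{j=1}^k ‖q_j‖² (Euclidean norms on ℂ^α). -/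
/-!
Each unitary `g_j` conserves energy: `‖p_j‖² + ‖x_j‖² = ‖q_j‖² + ‖y_j‖²`. Positivity of the form
on `L`, applied to the coordinate pairs `(x(t), y(t)) ∈ L`, gives `Σ_j |y_j(t)|² ≤ Σ_j |x_j(t)|²`
for every `t`, so the internal channels lose energy in total and the external ones must gain it.
-/

open Matrix

section
variable {𝕜 m n : Type*} [RCLike 𝕜] [Fintype m] [Fintype n]

theorem Matrix.star_dotProduct_self_eq_sum_norm_sq (v : n → 𝕜) :
    star v ⬝ᵥ v = ((∑ i, ‖v i‖ ^ 2 : ℝ) : 𝕜) := by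
  simp [dotProduct, RCLike.conj_mul]

theorem Matrix.sum_norm_sq_mulVec_of_mem_unitaryGroup [DecidableEq n] {A : Matrix n n 𝕜}
    (hA : A ∈ unitaryGroup n 𝕜) (v : n → 𝕜) :
    ∑ i, ‖(A *ᵥ v) i‖ ^ 2 = ∑ i, ‖v i‖ ^ 2 := by
  have h : star (A *ᵥ v) ⬝ᵥ (A *ᵥ v) = star v ⬝ᵥ v := by
    rw [star_mulVec, dotProduct_mulVec, vecMul_vecMul, ← star_eq_conjTranspose, hA.1, vecMul_one]
  simpa only [star_dotProduct_self_eq_sum_norm_sq, RCLike.ofReal_inj] using h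

theorem Matrix.mulVec_sumElim (g : Matrix (m ⊕ n) (m ⊕ n) 𝕜) (p : m → 𝕜) (x : n → 𝕜) :
    g *ᵥ Sum.elim p x = Sum.elim (g.toBlocks₁₁ *ᵥ p + g.toBlocks₁₂ *ᵥ x)
      (g.toBlocks₂₁ *ᵥ p + g.toBlocks₂₂ *ᵥ x) := by
  conv_lhs => rw [← fromBlocks_toBlocks g]
  rw [fromBlocks_mulVec, Sum.elim_comp_inl, Sum.elim_comp_inr]

theorem Matrix.sum_norm_sq_toBlocks_mulVec_of_mem_unitaryGroup [DecidableEq m] [DecidableEq n]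
    {g : Matrix (m ⊕ n) (m ⊕ n) 𝕜} (hg : g ∈ unitaryGroup (m ⊕ n) 𝕜) (p : m → 𝕜) (x : n → 𝕜) :
    ∑ s, ‖(g.toBlocks₁₁ *ᵥ p + g.toBlocks₁₂ *ᵥ x) s‖ ^ 2 +
        ∑ t, ‖(g.toBlocks₂₁ *ᵥ p + g.toBlocks₂₂ *ᵥ x) t‖ ^ 2 =
      ∑ s, ‖p s‖ ^ 2 + ∑ t, ‖x t‖ ^ 2 := by
  simpa only [mulVec_sumElim, Fintype.sum_sum_type, Sum.elim_inl, Sum.elim_inr] using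
    sum_norm_sq_mulVec_of_mem_unitaryGroup hg (Sum.elim p x)

end

/-- if the form `Σ|v_i|² − Σ|w_i|²` is positive definite on `L` and all the
matrices of the multiple colligation are unitary, then the form `Σ‖p_j‖² − Σ‖q_j‖²` is
negative semidefinite on the linear relation `X(𝔄; L)`. -/
theorem XRel_negSemidef {α N k : ℕ}
    (g : Fin k → Matrix (Fin α ⊕ Fin N) (Fin α ⊕ Fin N) ℂ)
    (hg : ∀ j, g j ∈ Matrix.unitaryGroup (Fin α ⊕ Fin N) ℂ)
    (L : Submodule ℂ ((Fin k → ℂ) × (Fin k → ℂ)))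
    (hL : ∀ vw ∈ L, vw ≠ 0 → 0 < ∑ i, ‖vw.1 i‖ ^ 2 - ∑ i, ‖vw.2 i‖ ^ 2)
    (p q : Fin k → Fin α → ℂ) (hpq : XRel g L p q) :
    ∑ j, ∑ s, ‖p j s‖ ^ 2 ≤ ∑ j, ∑ s, ‖q j s‖ ^ 2 := by
  obtain ⟨x, y, hq, hy, hmem⟩ := hpq
  have hbalance : ∑ j, (∑ s, ‖q j s‖ ^ 2 + ∑ t, ‖y j t‖ ^ 2) =
      ∑ j, (∑ s, ‖p j s‖ ^ 2 + ∑ t, ‖x j t‖ ^ 2) := by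
    refine Finset.sum_congr rfl fun j _ => ?_
    rw [hq j, hy j]
    exact sum_norm_sq_toBlocks_mulVec_of_mem_unitaryGroup (hg j) (p j) (x j)
  have hcoord (t : Fin N) : ∑ j, ‖y j t‖ ^ 2 ≤ ∑ j, ‖x j t‖ ^ 2 := by
    rcases eq_or_ne ((fun j => x j t, fun j => y j t) : (Fin k → ℂ) × (Fin k → ℂ)) 0
      with h0 | hne
    · simp only [Prod.ext_iff, Prod.fst_zero, Prod.snd_zero, funext_iff, Pi.zero_apply] at h0
      simp [h0]
    · linarith [hL _ (hmem t) hne]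
  have hdissip : ∑ j, ∑ t, ‖y j t‖ ^ 2 ≤ ∑ j, ∑ t, ‖x j t‖ ^ 2 := by
    rw [Finset.sum_comm, Finset.sum_comm (γ := Fin k)]
    exact Finset.sum_le_sum fun t _ => hcoord t
  rw [Finset.sum_add_distrib, Finset.sum_add_distrib] at hbalance
  linarith
end

section
/- Let α, p, q be natural numbers. Let g be an (α+2p)×(α+2p) complex matrix blocked (with rows and columns indexed by the decomposition α, p, p) as g = [[a,b_1,b_2],[c_1,d_{11},d_{12}],[c_2,d_{21},d_{22}]], and let h = [[a',b'_1,b'_2],[c'_1,d'_{11},d'_{12}],[c'_2,d'_{21},d'_{22}]] be an (α+2q)×(α+2q) matrix blocked analogously with blocks of sizes built from α and q. Define g∘h as the (α+2(p+q))×(α+2(p+q)) matrix, with rows and columns indexed by the decomposition α, p, q, p, q, given by the product [[a,b_1,0,b_2,0],[c_1,d_{11},0,d_{12},0],[0,0,1,0,0],[c_2,d_{21},0,d_{22},0],[0,0,0,0,1]] · [[a',0,b'_1,0,b'_2],[0,1,0,0,0],[c'_1,0,d'_{11},0,d'_{12}],[0,0,0,1,0],[c'_2,0,d'_{21},0,d'_{22}]].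 Let S be a 2×2 complex matrix such that the matrices S̃_p − D_g and S̃_q − D_h are invertible, where for a size r, S̃_r is the 2r×2r block matrix with (i,j) block s_{ij}·1_r, and D_g = [[d_{11},d_{12}],[d_{21},d_{22}]], D_h = [[d'_{11},d'_{12}],[d'_{21},d'_{22}]]. Then S̃_{p+q} − D_{g∘h} is invertible (D_{g∘h} being the lower-right 2(p+q)×2(p+q) block of g∘h in the indexing (p,q,p,q)) and χ(g∘h; S) = χ(g; S) · χ(h; S). -/
/-!
Regroup the indices `(p, q, p, q)` of `g∘h` as `((p, p), (q, q))`. Then `g∘h` has blocks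
`a a'`, `[B_g, a B_h]`, `[C_g a'; C_h]`, and `S̃_{p+q} − D_{g∘h}` becomes block upper triangular
with diagonal blocks `X = S̃_p − D_g`, `Y = S̃_q − D_h` and corner `−C_g B_h`. Inverting it
blockwise, `χ(g∘h; S)` expands into terms that recombine as
`(a + B_g X⁻¹ C_g)(a' + B_h Y⁻¹ C_h)`.
-/

open Matrix

/-- `S̃_I`: for a `2 × 2` matrix `S`, the block matrix on `I ⊕ I` with `(i,j)` block
`s_{ij} · 1`. -/
noncomputable def sT2 (I : Type*) [DecidableEq I] (S : Matrix (Fin 2) (Fin 2) ℂ) :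
    Matrix (I ⊕ I) (I ⊕ I) ℂ :=
  fromBlocks (S 0 0 • 1) (S 0 1 • 1) (S 1 0 • 1) (S 1 1 • 1)

/-- The characteristic function on `2 × 2` matrices of a colligation
`g = [[a,b₁,b₂],[c₁,d₁₁,d₁₂],[c₂,d₂₁,d₂₂]]` (blocked over `A ⊕ (I ⊕ I)`):
`χ(g; S) = a + B·(S̃ − D)⁻¹·C` where `B = [b₁ b₂]`, `C = [c₁; c₂]`,
`D = [[d₁₁,d₁₂],[d₂₁,d₂₂]]`. -/
noncomputable def chi2 {A I : Type*} [Fintype A] [Fintype I] [DecidableEq I]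
    (g : Matrix (A ⊕ (I ⊕ I)) (A ⊕ (I ⊕ I)) ℂ) (S : Matrix (Fin 2) (Fin 2) ℂ) :
    Matrix A A ℂ :=
  g.toBlocks₁₁ + g.toBlocks₁₂ * (sT2 I S - g.toBlocks₂₂)⁻¹ * g.toBlocks₂₁

/-- The product `g∘h` of colligations of sizes `(A, P ⊕ P)` and `(A, Q ⊕ Q)`, given as the
product of the two matrices
`[[a,b₁,0,b₂,0],[c₁,d₁₁,0,d₁₂,0],[0,0,1,0,0],[c₂,d₂₁,0,d₂₂,0],[0,0,0,0,1]]` and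
`[[a',0,b₁',0,b₂'],[0,1,0,0,0],[c₁',0,d₁₁',0,d₁₂'],[0,0,0,1,0],[c₂',0,d₂₁',0,d₂₂']]`,
with rows and columns indexed by `A ⊕ ((P ⊕ Q) ⊕ (P ⊕ Q))`. -/
noncomputable def prod2 {A P Q : Type*} [Fintype A] [Fintype P] [Fintype Q]
    [DecidableEq P] [DecidableEq Q]
    (g : Matrix (A ⊕ (P ⊕ P)) (A ⊕ (P ⊕ P)) ℂ)
    (h : Matrix (A ⊕ (Q ⊕ Q)) (A ⊕ (Q ⊕ Q)) ℂ) :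
    Matrix (A ⊕ ((P ⊕ Q) ⊕ (P ⊕ Q))) (A ⊕ ((P ⊕ Q) ⊕ (P ⊕ Q))) ℂ :=
  (fromBlocks g.toBlocks₁₁
      (fromCols (fromCols (g.toBlocks₁₂.submatrix id Sum.inl) 0)
        (fromCols (g.toBlocks₁₂.submatrix id Sum.inr) 0))
      (fromRows (fromRows (g.toBlocks₂₁.submatrix Sum.inl id) 0)
        (fromRows (g.toBlocks₂₁.submatrix Sum.inr id) 0))
      (fromBlocks (fromBlocks g.toBlocks₂₂.toBlocks₁₁ 0 0 1)
        (fromBlocks g.toBlocks₂₂.toBlocks₁₂ 0 0 0)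
        (fromBlocks g.toBlocks₂₂.toBlocks₂₁ 0 0 0)
        (fromBlocks g.toBlocks₂₂.toBlocks₂₂ 0 0 1))) *
  (fromBlocks h.toBlocks₁₁
      (fromCols (fromCols 0 (h.toBlocks₁₂.submatrix id Sum.inl))
        (fromCols 0 (h.toBlocks₁₂.submatrix id Sum.inr)))
      (fromRows (fromRows 0 (h.toBlocks₂₁.submatrix Sum.inl id))
        (fromRows 0 (h.toBlocks₂₁.submatrix Sum.inr id)))
      (fromBlocks (fromBlocks 1 0 0 h.toBlocks₂₂.toBlocks₁₁)
        (fromBlocks 0 0 0 h.toBlocks₂₂.toBlocks₁₂)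
        (fromBlocks 0 0 0 h.toBlocks₂₂.toBlocks₂₁)
        (fromBlocks 1 0 0 h.toBlocks₂₂.toBlocks₂₂)))

namespace Matrix

theorem fromBlocks_sub {α l m n o : Type*} [Sub α] (A : Matrix n l α) (B : Matrix n m α)
    (C : Matrix o l α) (D : Matrix o m α) (A' : Matrix n l α) (B' : Matrix n m α)
    (C' : Matrix o l α) (D' : Matrix o m α) :
    fromBlocks A B C D - fromBlocks A' B' C' D' = fromBlocks (A - A') (B - B') (C - C') (D - D') := by
  ext (_ | _) (_ | _) <;> rfl

variable {R l m n : Type*} [CommRing R] [Fintype m] [Fintype n] [DecidableEq m] [DecidableEq n]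

theorem submatrix_mul_inv_submatrix_mul_submatrix (B : Matrix l m R) (T : Matrix m m R)
    (C : Matrix m l R) (e : n ≃ m) :
    B.submatrix id e * (T.submatrix e e)⁻¹ * C.submatrix e id = B * T⁻¹ * C := by
  rw [inv_submatrix_equiv, submatrix_mul_equiv, submatrix_mul_equiv, submatrix_id_id]

theorem mul_add_fromCols_mul_inv_fromBlocks_mul_fromRows [Fintype l]
    (a a' : Matrix l l R) (b : Matrix l m R) (c : Matrix m l R) (X : Matrix m m R)
    (b' : Matrix l n R) (c' : Matrix n l R) (Y : Matrix n n R) (hXY : IsUnit X ↔ IsUnit Y) :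
    a * a' + fromCols b (a * b') * (fromBlocks X (-(c * b')) 0 Y)⁻¹ * fromRows (c * a') c' =
      (a + b * X⁻¹ * c) * (a' + b' * Y⁻¹ * c') := by
  rw [inv_fromBlocks_zero₂₁_of_isUnit_iff _ _ _ hXY, fromCols_mul_fromBlocks,
    fromCols_mul_fromRows]
  simp only [Matrix.mul_neg, Matrix.neg_mul, neg_neg, Matrix.mul_zero, add_zero,
    Matrix.add_mul, Matrix.mul_add, Matrix.mul_assoc]
  abel

end Matrix

theorem sT2_sum {P Q : Type*} [DecidableEq P] [DecidableEq Q] (S : Matrix (Fin 2) (Fin 2) ℂ) :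
    sT2 (P ⊕ Q) S = (fromBlocks (sT2 P S) 0 0 (sT2 Q S)).submatrix
      (Equiv.sumSumSumComm P Q P Q) (Equiv.sumSumSumComm P Q P Q) := by
  ext ((i | i) | (i | i)) ((j | j) | (j | j)) <;> simp [sT2, one_apply]

section Colligation

variable {A P Q : Type*} [Fintype A] [Fintype P] [Fintype Q] [DecidableEq P] [DecidableEq Q]

theorem prod2_eq_fromBlocks (g : Matrix (A ⊕ (P ⊕ P)) (A ⊕ (P ⊕ P)) ℂ)
    (h : Matrix (A ⊕ (Q ⊕ Q)) (A ⊕ (Q ⊕ Q)) ℂ) :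
    prod2 g h = fromBlocks (g.toBlocks₁₁ * h.toBlocks₁₁)
      ((fromCols g.toBlocks₁₂ (g.toBlocks₁₁ * h.toBlocks₁₂)).submatrix id
        (Equiv.sumSumSumComm P Q P Q))
      ((fromRows (g.toBlocks₂₁ * h.toBlocks₁₁) h.toBlocks₂₁).submatrix
        (Equiv.sumSumSumComm P Q P Q) id)
      ((fromBlocks g.toBlocks₂₂ (g.toBlocks₂₁ * h.toBlocks₁₂) 0 h.toBlocks₂₂).submatrix
        (Equiv.sumSumSumComm P Q P Q) (Equiv.sumSumSumComm P Q P Q)) := by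
  ext (i | (i | i) | (i | i)) (j | (j | j) | (j | j)) <;>
    simp [prod2, mul_apply, Fintype.sum_sum_type, one_apply, toBlocks₁₁, toBlocks₁₂,
      toBlocks₂₁, toBlocks₂₂]

theorem sT2_sub_toBlocks₂₂_prod2 (g : Matrix (A ⊕ (P ⊕ P)) (A ⊕ (P ⊕ P)) ℂ)
    (h : Matrix (A ⊕ (Q ⊕ Q)) (A ⊕ (Q ⊕ Q)) ℂ) (S : Matrix (Fin 2) (Fin 2) ℂ) :
    sT2 (P ⊕ Q) S - (prod2 g h).toBlocks₂₂ =
      (fromBlocks (sT2 P S - g.toBlocks₂₂) (-(g.toBlocks₂₁ * h.toBlocks₁₂)) 0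
        (sT2 Q S - h.toBlocks₂₂)).submatrix
        (Equiv.sumSumSumComm P Q P Q) (Equiv.sumSumSumComm P Q P Q) := by
  rw [sT2_sum, prod2_eq_fromBlocks, toBlocks_fromBlocks₂₂, ← Pi.sub_apply, ← Pi.sub_apply,
    ← submatrix_sub, fromBlocks_sub, sub_zero, zero_sub]

theorem isUnit_sT2_sub_toBlocks₂₂_prod2_iff (g : Matrix (A ⊕ (P ⊕ P)) (A ⊕ (P ⊕ P)) ℂ)
    (h : Matrix (A ⊕ (Q ⊕ Q)) (A ⊕ (Q ⊕ Q)) ℂ) (S : Matrix (Fin 2) (Fin 2) ℂ) :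
    IsUnit (sT2 (P ⊕ Q) S - (prod2 g h).toBlocks₂₂) ↔
      IsUnit (sT2 P S - g.toBlocks₂₂) ∧ IsUnit (sT2 Q S - h.toBlocks₂₂) := by
  rw [sT2_sub_toBlocks₂₂_prod2, isUnit_submatrix_equiv, isUnit_fromBlocks_zero₂₁]

theorem chi2_prod2 (g : Matrix (A ⊕ (P ⊕ P)) (A ⊕ (P ⊕ P)) ℂ)
    (h : Matrix (A ⊕ (Q ⊕ Q)) (A ⊕ (Q ⊕ Q)) ℂ) (S : Matrix (Fin 2) (Fin 2) ℂ)
    (hgh : IsUnit (sT2 P S - g.toBlocks₂₂) ↔ IsUnit (sT2 Q S - h.toBlocks₂₂)) :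
    chi2 (prod2 g h) S = chi2 g S * chi2 h S := by
  rw [chi2, sT2_sub_toBlocks₂₂_prod2, prod2_eq_fromBlocks, toBlocks_fromBlocks₁₁,
    toBlocks_fromBlocks₁₂, toBlocks_fromBlocks₂₁, submatrix_mul_inv_submatrix_mul_submatrix,
    mul_add_fromCols_mul_inv_fromBlocks_mul_fromRows _ _ _ _ _ _ _ _ hgh]
  rfl

end Colligation

/-- multiplicativity of the characteristic function for colligations of the
form `(α, p, p)`: `χ(g∘h; S) = χ(g; S)·χ(h; S)` whenever `S̃_p − D_g` and `S̃_q − D_h`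
are invertible, in which case `S̃_{p+q} − D_{g∘h}` is also invertible. -/
theorem chi2_mul {α p q : ℕ}
    (g : Matrix (Fin α ⊕ (Fin p ⊕ Fin p)) (Fin α ⊕ (Fin p ⊕ Fin p)) ℂ)
    (h : Matrix (Fin α ⊕ (Fin q ⊕ Fin q)) (Fin α ⊕ (Fin q ⊕ Fin q)) ℂ)
    (S : Matrix (Fin 2) (Fin 2) ℂ)
    (hg : IsUnit (sT2 (Fin p) S - g.toBlocks₂₂))
    (hh : IsUnit (sT2 (Fin q) S - h.toBlocks₂₂)) :
    IsUnit (sT2 (Fin p ⊕ Fin q) S - (prod2 g h).toBlocks₂₂) ∧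
      chi2 (prod2 g h) S = chi2 g S * chi2 h S :=
  ⟨(isUnit_sT2_sub_toBlocks₂₂_prod2_iff g h S).mpr ⟨hg, hh⟩,
    chi2_prod2 g h S (iff_of_true hg hh)⟩
end
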